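/- arXiv:1801.01761 — 2 statements merged into one kernel-verified Lean document; each statement's English description precedes it below -/
import Mathlib

section
/- Let Λ > 0 and let φ : ℝ → ℂ be continuous with compact support. Then the one-dimensional Bloch transform is an L²-isometry (Parseval identity): ∫_ℝ |φ(x)|² dx = ∫_{−π/Λ}^{π/Λ} ∫_{−Λ/2}^{Λ/2} |(J_ℝφ)(α, x)|² dx dα. -/
open Complex MeasureTheory

/-- The one-dimensional Floquet-Bloch transform with period `Λ`:
`(J_ℝ φ)(α, x) = (Λ/(2π))^{1/2} ∑_{j ∈ ℤ} φ(x + Λj) e^{-iαΛj}`. -/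
noncomputable def blochR (Λ : ℝ) (φ : ℝ → ℂ) (α x : ℝ) : ℂ :=
  ((Real.sqrt (Λ / (2 * Real.pi)) : ℝ) : ℂ) *
    ∑' j : ℤ, φ (x + Λ * j) * Complex.exp (-(Complex.I * α * Λ * j))

/-- The elementary exponential appearing in the Bloch transform. -/
noncomputable def blochE (Λ : ℝ) (j : ℤ) (α : ℝ) : ℂ :=
  Complex.exp (-(Complex.I * α * Λ * j))

lemma blochE_continuous (Λ : ℝ) (j : ℤ) : Continuous (blochE Λ j) := by
  unfold blochE; fun_prop

lemma norm_sq_eq_re_mul_conj (z : ℂ) : ‖z‖ ^ 2 = (z * (starRingEnd ℂ) z).re := by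
  rw [Complex.mul_conj, Complex.ofReal_re, Complex.normSq_eq_norm_sq]

lemma re_mul_ofReal' (z : ℂ) (r : ℝ) : (z * (r : ℂ)).re = z.re * r := by
  simp [Complex.mul_re]

lemma intervalIntegral_re {f : ℝ → ℂ} {a b : ℝ} (hf : IntervalIntegrable f volume a b) :
    (∫ x in a..b, f x).re = ∫ x in a..b, (f x).re := by
  simpa using (ContinuousLinearMap.intervalIntegral_comp_comm Complex.reCLM hf).symm

lemma blochE_conj_mul (j k : ℤ) (Λ α : ℝ) :
    blochE Λ j α * (starRingEnd ℂ) (blochE Λ k α) =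
    Complex.exp ((Complex.I * Λ * ((k : ℂ) - j)) * α) := by
  unfold blochE
  rw [← Complex.exp_conj, ← Complex.exp_add]
  congr 1
  simp only [map_neg, map_mul, Complex.conj_I, Complex.conj_ofReal, map_intCast]
  ring

lemma integral_blochE_conj_mul {Λ : ℝ} (hΛ : 0 < Λ) (j k : ℤ) :
    (∫ α in (-(Real.pi / Λ))..(Real.pi / Λ), blochE Λ j α * (starRingEnd ℂ) (blochE Λ k α)) =
      if j = k then ((2 * Real.pi / Λ : ℝ) : ℂ) else 0 := by
  simp_rw [blochE_conj_mul]
  rcases eq_or_ne j k with h | h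
  · subst h
    simp only [sub_self, mul_zero, zero_mul, Complex.exp_zero, if_pos rfl]
    rw [intervalIntegral.integral_const]
    push_cast
    rw [Complex.real_smul]
    push_cast
    ring_nf
  · rw [if_neg h]
    have hc : (Complex.I * Λ * ((k : ℂ) - j)) ≠ 0 := by
      apply mul_ne_zero
      · exact mul_ne_zero Complex.I_ne_zero (by exact_mod_cast hΛ.ne')
      · rw [sub_ne_zero]
        exact_mod_cast fun hh => h (by exact_mod_cast hh.symm)
    rw [integral_exp_mul_complex hc, div_eq_zero_iff]
    left
    rw [sub_eq_zero]
    apply Complex.exp_eq_exp_iff_exists_int.mpr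
    refine ⟨k - j, ?_⟩
    have hΛ' : (Λ : ℂ) ≠ 0 := by exact_mod_cast hΛ.ne'
    push_cast
    field_simp
    ring

/-- Parseval identity: the one-dimensional Bloch transform is an `L²`-isometry from
`L²(ℝ)` onto `L²((-π/Λ, π/Λ] × (-Λ/2, Λ/2])`. -/
theorem blochR_parseval (Λ : ℝ) (hΛ : 0 < Λ) (φ : ℝ → ℂ)
    (hcont : Continuous φ) (hsupp : HasCompactSupport φ) :
    (∫ x : ℝ, ‖φ x‖ ^ 2) =
      ∫ α in (-(Real.pi / Λ))..(Real.pi / Λ),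
        ∫ x in (-(Λ / 2))..(Λ / 2), ‖blochR Λ φ α x‖ ^ 2 := by
  have hπ := Real.pi_pos
  set c : ℝ := Real.sqrt (Λ / (2 * Real.pi)) with hc
  have hc2 : c ^ 2 = Λ / (2 * Real.pi) := Real.sq_sqrt (by positivity)
  -- support bound
  obtain ⟨R, hR⟩ := (Metric.isBounded_iff_subset_closedBall 0).mp hsupp.isBounded
  have hφ0 : ∀ x : ℝ, R < |x| → φ x = 0 := by
    intro x hx
    by_contra hne
    have hxmem : x ∈ tsupport φ := subset_tsupport φ (by simpa [Function.mem_support] using hne)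
    have := hR hxmem
    rw [Metric.mem_closedBall, Real.dist_eq, sub_zero] at this
    linarith
  set R' : ℝ := max R 0 with hR'
  have hφ0' : ∀ x : ℝ, R' < |x| → φ x = 0 := fun x hx =>
    hφ0 x (lt_of_le_of_lt (le_max_left _ _) hx)
  have hR0 : (0 : ℝ) ≤ R' := le_max_right _ _
  obtain ⟨N, hN⟩ := exists_nat_ge ((R' + Λ) / Λ)
  have hΛN : R' + Λ ≤ Λ * N := by
    rw [div_le_iff₀ hΛ] at hN; linarith
  set S : Finset ℤ := Finset.Icc (-(N : ℤ)) (N : ℤ) with hS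
  -- vanishing outside S
  have hvanish : ∀ x ∈ Set.uIcc (-(Λ / 2)) (Λ / 2), ∀ j : ℤ, j ∉ S → φ (x + Λ * j) = 0 := by
    intro x hx j hj
    rw [Set.uIcc_of_le (by linarith)] at hx
    have hx1 : |x| ≤ Λ / 2 := abs_le.mpr ⟨hx.1, hx.2⟩
    have hjN : (N : ℤ) + 1 ≤ |j| := by
      simp only [hS, Finset.mem_Icc, not_and_or, not_le] at hj
      rcases le_or_gt 0 j with h0 | h0
      · rw [abs_of_nonneg h0]; omega
      · rw [abs_of_neg h0]; omega
    have hjN' : (N : ℝ) + 1 ≤ |(j : ℝ)| := by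
      rw [← Int.cast_abs]
      exact_mod_cast hjN
    apply hφ0'
    have h1 : |Λ * (j : ℝ)| ≤ |x + Λ * j| + |x| := by
      calc |Λ * (j : ℝ)| = |(x + Λ * j) + (-x)| := by ring_nf
        _ ≤ |x + Λ * j| + |-x| := abs_add_le _ _
        _ = |x + Λ * j| + |x| := by rw [abs_neg]
    rw [abs_mul, abs_of_pos hΛ] at h1
    nlinarith [h1, hjN', hx1]
  -- Step 1 : bloch as a finite sum on the fundamental cell
  have hbloch : ∀ (α : ℝ), ∀ x ∈ Set.uIcc (-(Λ / 2)) (Λ / 2),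
      blochR Λ φ α x = (c : ℂ) * ∑ j ∈ S, φ (x + Λ * j) * blochE Λ j α := by
    intro α x hx
    unfold blochR blochE
    congr 1
    exact tsum_eq_sum (fun j hj => by rw [hvanish x hx j hj, zero_mul])
  -- the matrix of inner products over the cell
  set A : ℤ → ℤ → ℂ := fun j k =>
      ∫ x in (-(Λ / 2))..(Λ / 2), φ (x + Λ * j) * (starRingEnd ℂ) (φ (x + Λ * k)) with hA
  have hconta : ∀ j k : ℤ,
      Continuous fun x : ℝ => φ (x + Λ * j) * (starRingEnd ℂ) (φ (x + Λ * k)) := by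
    intro j k
    exact (hcont.comp (continuous_id.add continuous_const)).mul
      (continuous_star.comp (hcont.comp (continuous_id.add continuous_const)))
  -- Step 2 : inner integral in x
  have hstep2 : ∀ α : ℝ,
      (∫ x in (-(Λ / 2))..(Λ / 2), ‖blochR Λ φ α x‖ ^ 2) =
        (Λ / (2 * Real.pi)) *
          (∑ j ∈ S, ∑ k ∈ S,
            A j k * (blochE Λ j α * (starRingEnd ℂ) (blochE Λ k α))).re := by
    intro α
    have h1 : (∫ x in (-(Λ / 2))..(Λ / 2), ‖blochR Λ φ α x‖ ^ 2) =
        ∫ x in (-(Λ / 2))..(Λ / 2), (Λ / (2 * Real.pi)) *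
          (∑ j ∈ S, ∑ k ∈ S,
            (φ (x + Λ * j) * (starRingEnd ℂ) (φ (x + Λ * k))) *
              (blochE Λ j α * (starRingEnd ℂ) (blochE Λ k α))).re := by
      apply intervalIntegral.integral_congr
      intro x hx
      dsimp only
      rw [hbloch α x hx]
      have hnorm : ‖(c : ℂ) * ∑ j ∈ S, φ (x + Λ * j) * blochE Λ j α‖ ^ 2 =
          (Λ / (2 * Real.pi)) *
            ((∑ j ∈ S, φ (x + Λ * j) * blochE Λ j α) *
              (starRingEnd ℂ) (∑ j ∈ S, φ (x + Λ * j) * blochE Λ j α)).re := by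
        rw [norm_mul, mul_pow, norm_sq_eq_re_mul_conj, norm_sq_eq_re_mul_conj]
        congr 1
        rw [Complex.mul_conj, Complex.ofReal_re, Complex.normSq_ofReal, ← hc2, sq]
      rw [hnorm]
      congr 2
      rw [map_sum, Finset.sum_mul_sum]
      apply Finset.sum_congr rfl
      intro j _
      apply Finset.sum_congr rfl
      intro k _
      rw [map_mul]
      ring
    rw [h1, intervalIntegral.integral_const_mul]
    congr 1
    rw [← intervalIntegral_re]
    · congr 1
      rw [intervalIntegral.integral_finset_sum]
      · apply Finset.sum_congr rfl
        intro j _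
        rw [intervalIntegral.integral_finset_sum]
        · apply Finset.sum_congr rfl
          intro k _
          rw [intervalIntegral.integral_mul_const]
        · intro k _
          exact ((hconta j k).mul continuous_const).intervalIntegrable _ _
      · intro j _
        apply Continuous.intervalIntegrable
        apply continuous_finset_sum
        intro k _
        exact (hconta j k).mul continuous_const
    · apply Continuous.intervalIntegrable
      apply continuous_finset_sum
      intro j _
      apply continuous_finset_sum
      intro k _
      exact (hconta j k).mul continuous_const
  -- Step 3 : outer integral in α
  have hRHS : (∫ α in (-(Real.pi / Λ))..(Real.pi / Λ),
        ∫ x in (-(Λ / 2))..(Λ / 2), ‖blochR Λ φ α x‖ ^ 2) = ∑ j ∈ S, (A j j).re := by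
    rw [intervalIntegral.integral_congr (g := fun α => (Λ / (2 * Real.pi)) *
      (∑ j ∈ S, ∑ k ∈ S,
        A j k * (blochE Λ j α * (starRingEnd ℂ) (blochE Λ k α))).re)
      (fun α _ => hstep2 α)]
    rw [intervalIntegral.integral_const_mul, ← intervalIntegral_re]
    · rw [intervalIntegral.integral_finset_sum]
      · have hswap : ∀ j ∈ S,
            (∫ α in (-(Real.pi / Λ))..(Real.pi / Λ), ∑ k ∈ S,
              A j k * (blochE Λ j α * (starRingEnd ℂ) (blochE Λ k α))) =
            A j j * ((2 * Real.pi / Λ : ℝ) : ℂ) := by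
          intro j hj
          rw [intervalIntegral.integral_finset_sum]
          · have : ∀ k ∈ S,
                (∫ α in (-(Real.pi / Λ))..(Real.pi / Λ),
                  A j k * (blochE Λ j α * (starRingEnd ℂ) (blochE Λ k α))) =
                A j k * (if j = k then ((2 * Real.pi / Λ : ℝ) : ℂ) else 0) := by
              intro k _
              rw [intervalIntegral.integral_const_mul, integral_blochE_conj_mul hΛ]
            rw [Finset.sum_congr rfl this]
            rw [Finset.sum_eq_single j (fun k _ hk => by rw [if_neg fun h => hk h.symm, mul_zero])
              (fun h => absurd hj h)]
            rw [if_pos rfl]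
          · intro k _
            apply Continuous.intervalIntegrable
            exact continuous_const.mul ((blochE_continuous Λ j).mul
              ((continuous_conj).comp (blochE_continuous Λ k)))
        rw [Finset.sum_congr rfl hswap, Complex.re_sum]
        have : ∀ j ∈ S, (A j j * ((2 * Real.pi / Λ : ℝ) : ℂ)).re =
            (A j j).re * (2 * Real.pi / Λ) := fun j _ => re_mul_ofReal' _ _
        rw [Finset.sum_congr rfl this, ← Finset.sum_mul]
        field_simp
      · intro j _
        apply Continuous.intervalIntegrable
        apply continuous_finset_sum
        intro k _
        exact continuous_const.mul ((blochE_continuous Λ j).mul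
          ((continuous_conj).comp (blochE_continuous Λ k)))
    · apply Continuous.intervalIntegrable
      apply continuous_finset_sum
      intro j _
      apply continuous_finset_sum
      intro k _
      exact continuous_const.mul ((blochE_continuous Λ j).mul
        ((continuous_conj).comp (blochE_continuous Λ k)))
  -- Step 4 : diagonal entries
  have hAjj : ∀ j : ℤ, (A j j).re =
      ∫ x in (-(Λ / 2) + Λ * (j : ℝ))..(Λ / 2 + Λ * (j : ℝ)), ‖φ x‖ ^ 2 := by
    intro j
    rw [← intervalIntegral.integral_comp_add_right (fun x => ‖φ x‖ ^ 2) (Λ * (j : ℝ))]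
    rw [hA]
    rw [intervalIntegral_re (((hconta j j)).intervalIntegrable _ _)]
    apply intervalIntegral.integral_congr
    intro x _
    exact (norm_sq_eq_re_mul_conj _).symm
  -- Step 5 : summing the shifted cells
  have hsum : ∑ j ∈ S, (∫ x in (-(Λ / 2) + Λ * (j : ℝ))..(Λ / 2 + Λ * (j : ℝ)), ‖φ x‖ ^ 2)
      = ∫ x in (-(Λ / 2) + Λ * (-(N : ℝ)))..(Λ / 2 + Λ * (N : ℝ)), ‖φ x‖ ^ 2 := by
    have hmap : (Finset.range (2 * N + 1)).map
        ⟨fun i : ℕ => (i : ℤ) - N, @id (Function.Injective fun i : ℕ => (i : ℤ) - N) (fun a b h => by simp only at h; omega)⟩ = S := by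
      ext j
      simp only [hS, Finset.mem_map, Finset.mem_range, Function.Embedding.coeFn_mk,
        Finset.mem_Icc]
      constructor
      · rintro ⟨i, hi, rfl⟩; omega
      · intro h; exact ⟨(j + N).toNat, by omega, by omega⟩
    rw [← hmap, Finset.sum_map]
    set g : ℕ → ℝ := fun i => -(Λ / 2) + Λ * ((i : ℝ) - N) with hg
    have hadj := intervalIntegral.sum_integral_adjacent_intervals (a := g) (n := 2 * N + 1)
      (f := fun x => ‖φ x‖ ^ 2) (μ := volume)
      (fun k _ => ((hcont.norm).pow 2).intervalIntegrable _ _)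
    have hadj2 : ∑ i ∈ Finset.range (2 * N + 1),
        (∫ x in (g i)..(g (i + 1)), ‖φ x‖ ^ 2) =
        ∫ x in (g 0)..(g (2 * N + 1)), ‖φ x‖ ^ 2 := hadj
    have hterm : ∀ i ∈ Finset.range (2 * N + 1),
        (∫ x in (-(Λ / 2) + Λ * ((((i : ℤ) - N : ℤ) : ℝ)))..(Λ / 2 + Λ * ((((i : ℤ) - N : ℤ) : ℝ))),
          ‖φ x‖ ^ 2) = ∫ x in (g i)..(g (i + 1)), ‖φ x‖ ^ 2 := by
      intro i _
      congr 1 <;> simp only [hg] <;> push_cast <;> ring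
    simp only [Function.Embedding.coeFn_mk]
    rw [Finset.sum_congr rfl hterm, hadj2]
    congr 1 <;> simp only [hg] <;> push_cast <;> ring
  -- Step 6 : the full-line integral localizes to the big interval
  have hfull : (∫ x : ℝ, ‖φ x‖ ^ 2) =
      ∫ x in (-(Λ / 2) + Λ * (-(N : ℝ)))..(Λ / 2 + Λ * (N : ℝ)), ‖φ x‖ ^ 2 := by
    rw [intervalIntegral.integral_of_le (by nlinarith)]
    symm
    apply setIntegral_eq_integral_of_forall_compl_eq_zero
    intro x hx
    rw [Set.mem_Ioc, not_and_or, not_lt, not_le] at hx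
    have hφx : φ x = 0 := by
      apply hφ0'
      rcases hx with h | h
      · have h2 := neg_le_abs x
        nlinarith
      · have h2 := le_abs_self x
        nlinarith
    simp [hφx]
  rw [hRHS, hfull, ← hsum]
  exact Finset.sum_congr rfl fun j _ => (hAjj j).symm
end

section
/- Let Λ > 0 and let φ : ℝ → ℂ be continuous with compact support, and let ψ : ℝ × ℝ → ℂ be continuous, Λ*-periodic in its first variable (ψ(α + Λ*, x) = ψ(α, x)) and α-quasi-periodic in its second variable (ψ(α, x + Λ) = e^{iαΛ} ψ(α, x)). Define (J⁻¹ψ)(x) := (Λ/(2π))^{1/2} ∫_{−π/Λ}^{π/Λ} ψ(α, x) dα. Then the adjoint relation ⟨J_ℝφ, ψ⟩ = ⟨φ, J⁻¹ψ⟩ holds, i.e. ∫_{−π/Λ}^{π/Λ} ∫_{−Λ/2}^{Λ/2} (J_ℝφ)(α, x) · conj(ψ(α, x)) dx dα = ∫_ℝ φ(x) · conj((J⁻¹ψ)(x)) dx. -/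
open Complex MeasureTheory

/-- The inverse Bloch transform candidate:
`(J⁻¹ ψ)(x) = (Λ/(2π))^{1/2} ∫_{-π/Λ}^{π/Λ} ψ(α, x) dα`. -/
noncomputable def blochRInv (Λ : ℝ) (ψ : ℝ → ℝ → ℂ) (x : ℝ) : ℂ :=
  ((Real.sqrt (Λ / (2 * Real.pi)) : ℝ) : ℂ) *
    ∫ α in (-(Real.pi / Λ))..(Real.pi / Λ), ψ α x

lemma quasi_int (Λ : ℝ) (ψ : ℝ → ℝ → ℂ)
    (hψquasi : ∀ α x : ℝ, ψ α (x + Λ) = Complex.exp (Complex.I * α * Λ) * ψ α x)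
    (α x : ℝ) : ∀ j : ℤ, ψ α (x + Λ * j) = Complex.exp (Complex.I * α * Λ * j) * ψ α x := by
  intro j
  induction j using Int.induction_on with
  | zero => simp
  | succ k ih =>
      have h1 : x + Λ * ((k : ℤ) + 1 : ℤ) = (x + Λ * (k : ℤ)) + Λ := by push_cast; ring
      rw [h1, hψquasi, ih, ← mul_assoc, ← Complex.exp_add]
      congr 2
      push_cast; ring
  | pred k ih =>
      have h1 : x + Λ * (-(k : ℤ) : ℤ) = (x + Λ * ((-(k : ℤ) - 1 : ℤ))) + Λ := by
        push_cast; ring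
      have h2 := hψquasi α (x + Λ * ((-(k : ℤ) - 1 : ℤ)))
      rw [← h1, ih] at h2
      have hexp : Complex.exp (Complex.I * α * Λ) ≠ 0 := Complex.exp_ne_zero _
      apply mul_left_cancel₀ hexp
      rw [← h2, ← mul_assoc, ← Complex.exp_add]
      congr 2
      push_cast; ring

lemma periodize (Λ : ℝ) (hΛ : 0 < Λ) (f : ℝ → ℂ) (hf : Continuous f)
    (hsupp : HasCompactSupport f) :
    ∫ x in Set.Ioc (-(Λ / 2)) (Λ / 2), (∑' j : ℤ, f (x + Λ * j)) = ∫ x : ℝ, f x := by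
  obtain ⟨R, hR⟩ := hsupp.isBounded.subset_closedBall 0
  set N : ℤ := ⌈R / Λ⌉ + 1 with hNdef
  have hceil : (R / Λ : ℝ) ≤ (⌈R / Λ⌉ : ℝ) := Int.le_ceil _
  have hNR : R + Λ ≤ Λ * N := by
    have : R ≤ Λ * (⌈R / Λ⌉ : ℝ) := by
      rw [← div_le_iff₀' hΛ]; exact hceil
    have hcast : (N : ℝ) = (⌈R / Λ⌉ : ℝ) + 1 := by push_cast [hNdef]; ring
    rw [hcast]; nlinarith
  have hzero : ∀ y : ℝ, R < |y| → f y = 0 := by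
    intro y hy
    apply image_eq_zero_of_notMem_tsupport
    intro hmem
    have := hR hmem
    rw [Metric.mem_closedBall, Real.dist_eq, sub_zero] at this
    linarith
  have key : ∀ x ∈ Set.Ioc (-(Λ / 2)) (Λ / 2), ∀ j ∉ Finset.Icc (-N) N, f (x + Λ * j) = 0 := by
    intro x hx j hj
    apply hzero
    have hxabs : |x| ≤ Λ / 2 := abs_le.2 ⟨le_of_lt hx.1, hx.2⟩
    have hjabs : (N : ℤ) + 1 ≤ |j| := by
      simp only [Finset.mem_Icc, not_and_or, not_le] at hj
      rcases hj with h | h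
      · exact le_trans (by omega) (neg_le_abs j)
      · exact le_trans (by omega) (le_abs_self j)
    have hjabsR : (N : ℝ) + 1 ≤ |(j : ℝ)| := by
      rw [← Int.cast_abs]; exact_mod_cast hjabs
    have htri : |Λ * j| ≤ |x + Λ * j| + |x| := by
      calc |Λ * j| = |(x + Λ * j) - x| := by ring_nf
        _ ≤ |x + Λ * j| + |x| := abs_sub _ _
    rw [abs_mul, abs_of_pos hΛ] at htri
    nlinarith [abs_nonneg (x + Λ * j)]
  have hJsum : ∀ x ∈ Set.Ioc (-(Λ / 2)) (Λ / 2),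
      (∑' j : ℤ, f (x + Λ * j)) = ∑ j ∈ Finset.Icc (-N) N, f (x + Λ * j) := fun x hx =>
    tsum_eq_sum (fun j hj => key x hx j hj)
  have hint : Integrable f := hf.integrable_of_hasCompactSupport hsupp
  haveI : MeasureTheory.VAddInvariantMeasure (AddSubgroup.zmultiples Λ) ℝ volume :=
    ⟨fun c s hs => measure_preimage_add _ _ _⟩
  have h𝓕 := isAddFundamentalDomain_Ioc hΛ (-(Λ / 2)) volume
  rw [show -(Λ / 2) + Λ = Λ / 2 by ring] at h𝓕
  have htsum := h𝓕.integral_eq_tsum'' f hint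
  have hbij : Function.Bijective
      (fun n : ℤ => (⟨n • Λ, AddSubgroup.zsmul_mem_zmultiples Λ n⟩ :
        AddSubgroup.zmultiples Λ)) := by
    constructor
    · intro a b hab
      exact (zsmul_left_strictMono hΛ).injective (congrArg Subtype.val hab)
    · rintro ⟨g, hg⟩
      obtain ⟨k, hk⟩ := AddSubgroup.mem_zmultiples_iff.1 hg
      exact ⟨k, Subtype.ext hk⟩
  rw [← (Equiv.ofBijective _ hbij).tsum_eq] at htsum
  have hterm : ∀ j : ℤ,
      (∫ x in Set.Ioc (-(Λ / 2)) (Λ / 2), f ((Equiv.ofBijective _ hbij) j +ᵥ x))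
        = ∫ x in Set.Ioc (-(Λ / 2)) (Λ / 2), f (x + Λ * j) := by
    intro j
    apply setIntegral_congr_fun measurableSet_Ioc
    intro x _
    show f ((Equiv.ofBijective _ hbij) j +ᵥ x) = f (x + Λ * j)
    have hv : ((Equiv.ofBijective _ hbij) j +ᵥ x : ℝ) = (j • Λ) + x := rfl
    rw [hv, zsmul_eq_mul]
    ring_nf
  rw [tsum_congr hterm] at htsum
  rw [htsum]
  have hzint : ∀ j ∉ Finset.Icc (-N) N,
      (∫ x in Set.Ioc (-(Λ / 2)) (Λ / 2), f (x + Λ * j)) = 0 := by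
    intro j hj
    apply setIntegral_eq_zero_of_forall_eq_zero
    intro x hx
    exact key x hx j hj
  rw [tsum_eq_sum hzint]
  rw [setIntegral_congr_fun measurableSet_Ioc hJsum]
  apply integral_finset_sum
  intro j _
  exact ((hf.comp (continuous_add_right (Λ * j))).integrable_of_hasCompactSupport
    (hsupp.comp_homeomorph (Homeomorph.addRight (Λ * (j : ℝ))))).integrableOn


/-- Adjoint relation `⟨J_ℝ φ, ψ⟩ = ⟨φ, J⁻¹ ψ⟩` for the one-dimensional Bloch transform,
for `ψ` continuous, `Λ*`-periodic in `α` and `α`-quasi-periodic in `x`. -/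
theorem blochR_adjoint (Λ : ℝ) (hΛ : 0 < Λ) (φ : ℝ → ℂ)
    (hcont : Continuous φ) (hsupp : HasCompactSupport φ)
    (ψ : ℝ → ℝ → ℂ) (hψcont : Continuous fun p : ℝ × ℝ => ψ p.1 p.2)
    (hψper : ∀ α x : ℝ, ψ (α + 2 * Real.pi / Λ) x = ψ α x)
    (hψquasi : ∀ α x : ℝ, ψ α (x + Λ) = Complex.exp (Complex.I * α * Λ) * ψ α x) :
    (∫ α in (-(Real.pi / Λ))..(Real.pi / Λ),
        ∫ x in (-(Λ / 2))..(Λ / 2), blochR Λ φ α x * (starRingEnd ℂ) (ψ α x))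
      = ∫ x : ℝ, φ x * (starRingEnd ℂ) (blochRInv Λ ψ x) := by
  have hπΛ : 0 < Real.pi / Λ := div_pos Real.pi_pos hΛ
  have hIle : -(Real.pi / Λ) ≤ Real.pi / Λ := by linarith
  have hxle : -(Λ / 2) ≤ Λ / 2 := by linarith
  set c : ℂ := ((Real.sqrt (Λ / (2 * Real.pi)) : ℝ) : ℂ) with hc
  set I : Set ℝ := Set.Ioc (-(Real.pi / Λ)) (Real.pi / Λ) with hI
  -- Step 1: pointwise rewriting of the integrand
  have h1 : ∀ α x : ℝ, blochR Λ φ α x * (starRingEnd ℂ) (ψ α x)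
      = c * ∑' j : ℤ, (φ (x + Λ * j) * (starRingEnd ℂ) (ψ α (x + Λ * j))) := by
    intro α x
    rw [blochR, mul_assoc, ← tsum_mul_right]
    congr 1
    apply tsum_congr
    intro j
    rw [quasi_int Λ ψ hψquasi α x j, map_mul]
    have hconj : (starRingEnd ℂ) (Complex.exp (Complex.I * α * Λ * j))
        = Complex.exp (-(Complex.I * α * Λ * j)) := by
      rw [← Complex.exp_conj]
      congr 1
      simp only [map_mul, Complex.conj_I, Complex.conj_ofReal, map_intCast]
      ring
    rw [hconj]
    ring
  -- Step 2: the inner integral over one period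
  have h2 : ∀ α : ℝ, (∫ x in (-(Λ / 2))..(Λ / 2), blochR Λ φ α x * (starRingEnd ℂ) (ψ α x))
      = c * ∫ x : ℝ, φ x * (starRingEnd ℂ) (ψ α x) := by
    intro α
    have hcg : Continuous fun x : ℝ => φ x * (starRingEnd ℂ) (ψ α x) :=
      hcont.mul (continuous_conj.comp (hψcont.comp (Continuous.prodMk_right α)))
    have hsg : HasCompactSupport fun x : ℝ => φ x * (starRingEnd ℂ) (ψ α x) :=
      hsupp.mul_right
    rw [intervalIntegral.integral_of_le hxle]
    calc (∫ x in Set.Ioc (-(Λ / 2)) (Λ / 2), blochR Λ φ α x * (starRingEnd ℂ) (ψ α x))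
        = ∫ x in Set.Ioc (-(Λ / 2)) (Λ / 2),
            c * ∑' j : ℤ, (φ (x + Λ * j) * (starRingEnd ℂ) (ψ α (x + Λ * j))) := by
          exact setIntegral_congr_fun measurableSet_Ioc fun x _ => h1 α x
      _ = c * ∫ x in Set.Ioc (-(Λ / 2)) (Λ / 2),
            ∑' j : ℤ, ((fun y => φ y * (starRingEnd ℂ) (ψ α y)) (x + Λ * j)) :=
          integral_const_mul c _
      _ = c * ∫ x : ℝ, φ x * (starRingEnd ℂ) (ψ α x) := by
          rw [periodize Λ hΛ _ hcg hsg]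
  -- Integrability on the product space, for Fubini
  have hG : Continuous fun p : ℝ × ℝ => φ p.2 * (starRingEnd ℂ) (ψ p.1 p.2) :=
    (hcont.comp continuous_snd).mul (continuous_conj.comp hψcont)
  have hInt : Integrable (Function.uncurry fun α x : ℝ => φ x * (starRingEnd ℂ) (ψ α x))
      ((volume.restrict I).prod volume) := by
    have hmeas : (volume.restrict I).prod volume
        = (volume : Measure (ℝ × ℝ)).restrict (I ×ˢ Set.univ) := by
      have h := Measure.prod_restrict (μ := (volume : Measure ℝ)) (ν := (volume : Measure ℝ))
        I Set.univ
      rw [Measure.restrict_univ] at h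
      rw [h]
      rfl
    rw [hmeas]
    apply IntegrableOn.of_forall_diff_eq_zero
      (s := Set.Icc (-(Real.pi / Λ)) (Real.pi / Λ) ×ˢ tsupport φ)
    · exact hG.continuousOn.integrableOn_compact' (isCompact_Icc.prod hsupp)
        (measurableSet_Icc.prod (isClosed_tsupport φ).measurableSet)
    · exact measurableSet_Ioc.prod MeasurableSet.univ
    · rintro ⟨α, x⟩ ⟨⟨hα, -⟩, hnot⟩
      have hx : x ∉ tsupport φ := fun hx => hnot ⟨⟨hα.1.le, hα.2⟩, hx⟩
      show φ x * (starRingEnd ℂ) (ψ α x) = 0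
      rw [image_eq_zero_of_notMem_tsupport hx, zero_mul]
  have hswap := MeasureTheory.integral_integral_swap hInt
  -- Right-hand side pointwise
  have hRHS : ∀ x : ℝ, φ x * (starRingEnd ℂ) (blochRInv Λ ψ x)
      = c * ∫ α in I, (φ x * (starRingEnd ℂ) (ψ α x)) := by
    intro x
    rw [blochRInv, intervalIntegral.integral_of_le hIle, map_mul, hI]
    rw [show (starRingEnd ℂ) c = c from Complex.conj_ofReal _]
    rw [← integral_conj, integral_const_mul (φ x)]
    ring
  -- Assemble everything
  calc (∫ α in (-(Real.pi / Λ))..(Real.pi / Λ),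
        ∫ x in (-(Λ / 2))..(Λ / 2), blochR Λ φ α x * (starRingEnd ℂ) (ψ α x))
      = ∫ α in I, (c * ∫ x : ℝ, φ x * (starRingEnd ℂ) (ψ α x)) := by
        rw [intervalIntegral.integral_of_le hIle]
        exact setIntegral_congr_fun measurableSet_Ioc fun α _ => h2 α
    _ = c * ∫ α in I, ∫ x : ℝ, φ x * (starRingEnd ℂ) (ψ α x) := integral_const_mul c _
    _ = c * ∫ x : ℝ, ∫ α in I, (φ x * (starRingEnd ℂ) (ψ α x)) := by rw [hswap]
    _ = ∫ x : ℝ, c * ∫ α in I, (φ x * (starRingEnd ℂ) (ψ α x)) := (integral_const_mul c _).symm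
    _ = ∫ x : ℝ, φ x * (starRingEnd ℂ) (blochRInv Λ ψ x) := by
        exact integral_congr_ae (Filter.Eventually.of_forall fun x => (hRHS x).symm)
end
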